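/- Reducible cover: a term covered by reducible terms is reducible; i.e. if t ∈ Tm(Γ, T) is covered by the predicate 'is reducible at T', then t is reducible at T. -/
import Mathlib


namespace STLCp

/-- Types of the simply-typed λ-calculus with sums, over base types `B`. -/
inductive Ty (B : Type) : Type
  | base : B → Ty B
  | unit : Ty B
  | empty : Ty B
  | prod : Ty B → Ty B → Ty B
  | sum : Ty B → Ty B → Ty B
  | arr : Ty B → Ty B → Ty B

/-- Terms (de Bruijn style) over a set of constants `C`. -/
inductive Tm (C : Type) : Type
  | cst : C → Tm C
  | var : Nat → Tm C
  | star : Tm C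
  | pair : Tm C → Tm C → Tm C
  | proj1 : Tm C → Tm C
  | proj2 : Tm C → Tm C
  | lam : Tm C → Tm C
  | app : Tm C → Tm C → Tm C
  | inl : Tm C → Tm C
  | inr : Tm C → Tm C
  | raise : Tm C → Tm C
  | case : Tm C → Tm C → Tm C → Tm C

variable {B C : Type}

/-- Lifting a renaming under a binder. -/
def liftRen (ρ : Nat → Nat) : Nat → Nat
  | 0 => 0
  | n + 1 => ρ n + 1

/-- Action of renamings on terms. -/
def rename (ρ : Nat → Nat) : Tm C → Tm C
  | .cst c => .cst c
  | .var n => .var (ρ n)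
  | .star => .star
  | .pair t u => .pair (rename ρ t) (rename ρ u)
  | .proj1 t => .proj1 (rename ρ t)
  | .proj2 t => .proj2 (rename ρ t)
  | .lam t => .lam (rename (liftRen ρ) t)
  | .app t u => .app (rename ρ t) (rename ρ u)
  | .inl t => .inl (rename ρ t)
  | .inr t => .inr (rename ρ t)
  | .raise t => .raise (rename ρ t)
  | .case s bl br => .case (rename ρ s) (rename (liftRen ρ) bl) (rename (liftRen ρ) br)

/-- Lifting a parallel substitution under a binder. -/
def liftSub (σ : Nat → Tm C) : Nat → Tm C
  | 0 => .var 0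
  | n + 1 => rename Nat.succ (σ n)

/-- Action of parallel substitutions on terms, `t[σ]`. -/
def subst (σ : Nat → Tm C) : Tm C → Tm C
  | .cst c => .cst c
  | .var n => σ n
  | .star => .star
  | .pair t u => .pair (subst σ t) (subst σ u)
  | .proj1 t => .proj1 (subst σ t)
  | .proj2 t => .proj2 (subst σ t)
  | .lam t => .lam (subst (liftSub σ) t)
  | .app t u => .app (subst σ t) (subst σ u)
  | .inl t => .inl (subst σ t)
  | .inr t => .inr (subst σ t)
  | .raise t => .raise (subst σ t)
  | .case s bl br => .case (subst σ s) (subst (liftSub σ) bl) (subst (liftSub σ) br)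

/-- The substitution `u..`: maps the last variable to `u`, the identity elsewhere. -/
def sub0 (u : Tm C) : Nat → Tm C
  | 0 => u
  | n + 1 => .var n

/-- Eliminations: application, projections and case analysis. -/
inductive Elim (C : Type) : Type
  | eapp : Tm C → Elim C
  | eproj1 : Elim C
  | eproj2 : Elim C
  | ecase : Tm C → Tm C → Elim C

/-- Plugging a term into an elimination, `e[t]`. -/
def plug : Elim C → Tm C → Tm C
  | .eapp u, t => .app t u
  | .eproj1, t => .proj1 t
  | .eproj2, t => .proj2 t
  | .ecase bl br, t => .case t bl br

/-- Weakening the contents of an elimination (used when pushing it under a binder). -/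
def weakenElim : Elim C → Elim C
  | .eapp u => .eapp (rename Nat.succ u)
  | .eproj1 => .eproj1
  | .eproj2 => .eproj2
  | .ecase bl br => .ecase (rename (liftRen Nat.succ) bl) (rename (liftRen Nat.succ) br)

/-- The β-rules. -/
inductive BetaBase : Tm C → Tm C → Prop
  | proj1 (t u : Tm C) : BetaBase (.proj1 (.pair t u)) t
  | proj2 (t u : Tm C) : BetaBase (.proj2 (.pair t u)) u
  | app (t u : Tm C) : BetaBase (.app (.lam t) u) (subst (sub0 u) t)
  | case_inl (a bl br : Tm C) : BetaBase (.case (.inl a) bl br) (subst (sub0 a) bl)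
  | case_inr (b bl br : Tm C) : BetaBase (.case (.inr b) bl br) (subst (sub0 b) br)

/-- The commuting-conversion rules. -/
inductive CCBase : Tm C → Tm C → Prop
  | raise (e : Elim C) (t : Tm C) : CCBase (plug e (.raise t)) (.raise t)
  | case (e : Elim C) (s bl br : Tm C) :
      CCBase (plug e (.case s bl br))
        (.case s (plug (weakenElim e) bl) (plug (weakenElim e) br))

/-- Congruence closure of a base relation on terms. -/
inductive Cong (R : Tm C → Tm C → Prop) : Tm C → Tm C → Prop
  | base : R t u → Cong R t u
  | pairL : Cong R t t' → Cong R (.pair t u) (.pair t' u)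
  | pairR : Cong R u u' → Cong R (.pair t u) (.pair t u')
  | proj1 : Cong R t t' → Cong R (.proj1 t) (.proj1 t')
  | proj2 : Cong R t t' → Cong R (.proj2 t) (.proj2 t')
  | lam : Cong R t t' → Cong R (.lam t) (.lam t')
  | appL : Cong R t t' → Cong R (.app t u) (.app t' u)
  | appR : Cong R u u' → Cong R (.app t u) (.app t u')
  | inl : Cong R t t' → Cong R (.inl t) (.inl t')
  | inr : Cong R t t' → Cong R (.inr t) (.inr t')
  | raise : Cong R t t' → Cong R (.raise t) (.raise t')
  | caseS : Cong R s s' → Cong R (.case s bl br) (.case s' bl br)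
  | caseL : Cong R bl bl' → Cong R (.case s bl br) (.case s bl' br)
  | caseR : Cong R br br' → Cong R (.case s bl br) (.case s bl br')

/-- One-step β-reduction. -/
def StepBeta : Tm C → Tm C → Prop := Cong BetaBase

/-- One-step commuting-conversion reduction. -/
def StepCC : Tm C → Tm C → Prop := Cong CCBase

/-- One-step reduction (β-rules together with commuting conversions). -/
def Step : Tm C → Tm C → Prop := Cong (fun t u => BetaBase t u ∨ CCBase t u)

/-- Reflexive-transitive closures. -/
def RedsBeta : Tm C → Tm C → Prop := Relation.ReflTransGen StepBeta
def RedsCC : Tm C → Tm C → Prop := Relation.ReflTransGen StepCC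
def Reds : Tm C → Tm C → Prop := Relation.ReflTransGen Step

/-- Typing judgment `Γ ⊢ t : A` over a language given by `tyof : C → Ty B`.
Contexts are lists of types, the head being the last-bound variable. -/
inductive HasType (tyof : C → Ty B) : List (Ty B) → Tm C → Ty B → Prop
  | cst (Γ) (c : C) : HasType tyof Γ (.cst c) (tyof c)
  | var : Γ[n]? = some A → HasType tyof Γ (.var n) A
  | star : HasType tyof Γ .star .unit
  | pair : HasType tyof Γ t A → HasType tyof Γ u A' →
      HasType tyof Γ (.pair t u) (.prod A A')
  | proj1 : HasType tyof Γ p (.prod A A') → HasType tyof Γ (.proj1 p) A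
  | proj2 : HasType tyof Γ p (.prod A A') → HasType tyof Γ (.proj2 p) A'
  | lam : HasType tyof (A :: Γ) t A' → HasType tyof Γ (.lam t) (.arr A A')
  | app : HasType tyof Γ t (.arr A A') → HasType tyof Γ u A →
      HasType tyof Γ (.app t u) A'
  | raise : HasType tyof Γ t .empty → HasType tyof Γ (.raise t) A
  | inl : HasType tyof Γ a A → HasType tyof Γ (.inl a) (.sum A A')
  | inr : HasType tyof Γ b A' → HasType tyof Γ (.inr b) (.sum A A')
  | case : HasType tyof Γ s (.sum A A') → HasType tyof (A :: Γ) bl T →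
      HasType tyof (A' :: Γ) br T → HasType tyof Γ (.case s bl br) T

mutual
  /-- Bidirectional checking judgment `Γ ⊢ t ⇐ A` (normal forms). -/
  inductive Check (tyof : C → Ty B) : List (Ty B) → Tm C → Ty B → Prop
    | star : Check tyof Γ .star .unit
    | pair : Check tyof Γ t A → Check tyof Γ u A' →
        Check tyof Γ (.pair t u) (.prod A A')
    | lam : Check tyof (A :: Γ) t A' → Check tyof Γ (.lam t) (.arr A A')
    | inl : Check tyof Γ a A → Check tyof Γ (.inl a) (.sum A A')
    | inr : Check tyof Γ b A' → Check tyof Γ (.inr b) (.sum A A')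
    | demote : Infer tyof Γ t A → A = A' → Check tyof Γ t A'
    | raise : Infer tyof Γ t .empty → Check tyof Γ (.raise t) A
    | case : Infer tyof Γ s (.sum A A') → Check tyof (A :: Γ) bl T →
        Check tyof (A' :: Γ) br T → Check tyof Γ (.case s bl br) T

  /-- Bidirectional inference judgment `Γ ⊢ t ⇒ A` (neutral forms). -/
  inductive Infer (tyof : C → Ty B) : List (Ty B) → Tm C → Ty B → Prop
    | cst (Γ) (c : C) : Infer tyof Γ (.cst c) (tyof c)
    | var : Γ[n]? = some A → Infer tyof Γ (.var n) A
    | proj1 : Infer tyof Γ p (.prod A A') → Infer tyof Γ (.proj1 p) A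
    | proj2 : Infer tyof Γ p (.prod A A') → Infer tyof Γ (.proj2 p) A'
    | app : Infer tyof Γ t (.arr A A') → Check tyof Γ u A →
        Infer tyof Γ (.app t u) A'
end

/-- The substitution replacing the last variable by `inl` of itself
(used in the η-law for sums). -/
def inlSub : Nat → Tm C
  | 0 => .inl (.var 0)
  | n + 1 => .var (n + 1)

/-- The substitution replacing the last variable by `inr` of itself. -/
def inrSub : Nat → Tm C
  | 0 => .inr (.var 0)
  | n + 1 => .var (n + 1)

/-- Conversion `Γ ⊢ t ≡ u : A`: the least congruent equivalence relation on
well-typed terms containing the β and η laws for all type formers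
(the equational theory of bicartesian closed categories). -/
inductive Conv (tyof : C → Ty B) : List (Ty B) → Tm C → Tm C → Ty B → Prop
  | refl : HasType tyof Γ t A → Conv tyof Γ t t A
  | symm : Conv tyof Γ t u A → Conv tyof Γ u t A
  | trans : Conv tyof Γ t u A → Conv tyof Γ u v A → Conv tyof Γ t v A
  -- congruence
  | pair : Conv tyof Γ t t' A → Conv tyof Γ u u' A' →
      Conv tyof Γ (.pair t u) (.pair t' u') (.prod A A')
  | proj1 : Conv tyof Γ p p' (.prod A A') → Conv tyof Γ (.proj1 p) (.proj1 p') A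
  | proj2 : Conv tyof Γ p p' (.prod A A') → Conv tyof Γ (.proj2 p) (.proj2 p') A'
  | lam : Conv tyof (A :: Γ) t t' A' → Conv tyof Γ (.lam t) (.lam t') (.arr A A')
  | app : Conv tyof Γ t t' (.arr A A') → Conv tyof Γ u u' A →
      Conv tyof Γ (.app t u) (.app t' u') A'
  | inl : Conv tyof Γ a a' A → Conv tyof Γ (.inl a) (.inl a') (.sum A A')
  | inr : Conv tyof Γ b b' A' → Conv tyof Γ (.inr b) (.inr b') (.sum A A')
  | raise : Conv tyof Γ t t' .empty → Conv tyof Γ (.raise t) (.raise t') A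
  | case : Conv tyof Γ s s' (.sum A A') → Conv tyof (A :: Γ) bl bl' T →
      Conv tyof (A' :: Γ) br br' T →
      Conv tyof Γ (.case s bl br) (.case s' bl' br') T
  -- β laws
  | beta_proj1 : HasType tyof Γ t A → HasType tyof Γ u A' →
      Conv tyof Γ (.proj1 (.pair t u)) t A
  | beta_proj2 : HasType tyof Γ t A → HasType tyof Γ u A' →
      Conv tyof Γ (.proj2 (.pair t u)) u A'
  | beta_app : HasType tyof (A :: Γ) t A' → HasType tyof Γ u A →
      Conv tyof Γ (.app (.lam t) u) (subst (sub0 u) t) A'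
  | beta_inl : HasType tyof Γ a A → HasType tyof (A :: Γ) bl T →
      HasType tyof (A' :: Γ) br T →
      Conv tyof Γ (.case (.inl a) bl br) (subst (sub0 a) bl) T
  | beta_inr : HasType tyof Γ b A' → HasType tyof (A :: Γ) bl T →
      HasType tyof (A' :: Γ) br T →
      Conv tyof Γ (.case (.inr b) bl br) (subst (sub0 b) br) T
  -- η laws
  | eta_unit : HasType tyof Γ t .unit → Conv tyof Γ t .star .unit
  | eta_prod : HasType tyof Γ t (.prod A A') →
      Conv tyof Γ t (.pair (.proj1 t) (.proj2 t)) (.prod A A')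
  | eta_arr : HasType tyof Γ t (.arr A A') →
      Conv tyof Γ t (.lam (.app (rename Nat.succ t) (.var 0))) (.arr A A')
  | eta_empty : HasType tyof Γ s .empty → HasType tyof Γ u T →
      Conv tyof Γ u (.raise s) T
  | eta_sum : HasType tyof Γ s (.sum A A') → HasType tyof (.sum A A' :: Γ) u T →
      Conv tyof Γ (subst (sub0 s) u)
        (.case s (subst inlSub u) (subst inrSub u)) T

/-- `t` is covered by the predicate `F`: `t` is a case tree whose nodes are
eliminations of neutrals at positive types and whose leaves satisfy `F`
(in suitably extended contexts). -/
inductive Covered (tyof : C → Ty B) (F : List (Ty B) → Tm C → Prop) :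
    List (Ty B) → Tm C → Prop
  | leaf : F Γ t → Covered tyof F Γ t
  | raise : Infer tyof Γ n .empty → Covered tyof F Γ (.raise n)
  | case : Infer tyof Γ n (.sum A A') → Covered tyof F (A :: Γ) bl →
      Covered tyof F (A' :: Γ) br → Covered tyof F Γ (.case n bl br)

/-- `ρ` is a (typed) renaming from `Δ` to `Γ`. -/
def IsRen (ρ : Nat → Nat) (Δ Γ : List (Ty B)) : Prop :=
  ∀ n A, Γ[n]? = some A → Δ[ρ n]? = some A

/-- Values at a type, defined by induction on the type (logical relation). -/
def Value (tyof : C → Ty B) : Ty B → List (Ty B) → Tm C → Prop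
  | .base b => Covered tyof (fun Δ u => Infer tyof Δ u (.base b))
  | .empty => Covered tyof (fun Δ u => Infer tyof Δ u .empty)
  | .sum A A' => Covered tyof (fun Δ u =>
      Infer tyof Δ u (.sum A A') ∨
      (∃ a, u = .inl a ∧ Value tyof A Δ a) ∨
      (∃ b, u = .inr b ∧ Value tyof A' Δ b))
  | .unit => fun Γ t => Check tyof Γ t .unit
  | .prod A A' => fun Γ t => Check tyof Γ t (.prod A A') ∧
      (∃ v, Reds (.proj1 t) v ∧ Value tyof A Γ v) ∧
      (∃ v, Reds (.proj2 t) v ∧ Value tyof A' Γ v)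
  | .arr A A' => fun Γ t => Check tyof Γ t (.arr A A') ∧
      ∀ Δ ρ, IsRen ρ Δ Γ → ∀ u, Value tyof A Δ u →
        ∃ v, Reds (.app (rename ρ t) u) v ∧ Value tyof A' Δ v

/-- `t` is reducible at `T` in `Γ`: it reduces to a value at `T`. -/
def Reducible (tyof : C → Ty B) (T : Ty B) (Γ : List (Ty B)) (t : Tm C) : Prop :=
  ∃ v, Reds t v ∧ Value tyof T Γ v

/-- Polarised vocabulary of a type: `voc true A = A⁺`, `voc false A = A⁻`. -/
def voc (p : Bool) : Ty B → Set B
  | .base b => if p then {b} else ∅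
  | .unit => ∅
  | .empty => ∅
  | .prod A A' => voc p A ∪ voc p A'
  | .sum A A' => voc p A ∪ voc p A'
  | .arr A A' => voc (!p) A ∪ voc p A'

/-- Polarised vocabulary of a context. -/
def vocCtx (p : Bool) (Γ : List (Ty B)) : Set B :=
  {b | ∃ A ∈ Γ, b ∈ voc p A}

/-- Context partitions `Γ = Γs ⋈ Γt`. -/
inductive Splits {B : Type} : List (Ty B) → List (Ty B) → List (Ty B) → Type
  | nil : Splits [] [] []
  | left (A : Ty B) : Splits Γ Γs Γt → Splits (A :: Γ) (A :: Γs) Γt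
  | right (A : Ty B) : Splits Γ Γs Γt → Splits (A :: Γ) Γs (A :: Γt)

/-- The renaming embedding `Γs` into `Γ` induced by a partition. -/
def Splits.renS {B : Type} : {Γ Γs Γt : List (Ty B)} → Splits Γ Γs Γt → Nat → Nat
  | _, _, _, .nil => id
  | _, _, _, .left _ s => fun n => match n with | 0 => 0 | m + 1 => s.renS m + 1
  | _, _, _, .right _ s => fun n => s.renS n + 1

/-- The renaming embedding `Γt` into `Γ` induced by a partition. -/
def Splits.renT {B : Type} : {Γ Γs Γt : List (Ty B)} → Splits Γ Γs Γt → Nat → Nat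
  | _, _, _, .nil => id
  | _, _, _, .left _ s => fun n => s.renT n + 1
  | _, _, _, .right _ s => fun n => match n with | 0 => 0 | m + 1 => s.renT m + 1

/-- The composite `r[l..]` where `l` lives in one part of the context
(embedded via `ρl`) and the tail variables of `r` live in the other part
(embedded via `ρr`); the result lives in the full context. -/
def splice (ρl ρr : Nat → Nat) (l r : Tm C) : Tm C :=
  subst (fun n => match n with
    | 0 => rename ρl l
    | m + 1 => .var (ρr m)) r

/-- The (empty) constant-typing function for a language without constants. -/
def noCst {B : Type} : Empty → Ty B := fun c => c.elim

/-- The set of constants occurring in a term. -/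
def constsOf : Tm C → Set C
  | .cst c => {c}
  | .var _ => ∅
  | .star => ∅
  | .pair t u => constsOf t ∪ constsOf u
  | .proj1 t => constsOf t
  | .proj2 t => constsOf t
  | .lam t => constsOf t
  | .app t u => constsOf t ∪ constsOf u
  | .inl t => constsOf t
  | .inr t => constsOf t
  | .raise t => constsOf t
  | .case s bl br => constsOf s ∪ constsOf bl ∪ constsOf br


section Aux
variable {B C : Type} {tyof : C → Ty B}

theorem rename_ext {f g : Nat → Nat} (h : ∀ n, f n = g n) :
    ∀ t : Tm C, rename f t = rename g t := by
  intro t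
  induction t generalizing f g with
  | cst c => rfl
  | var n => simp [rename, h]
  | star => rfl
  | pair t u iht ihu => simp [rename, iht h, ihu h]
  | proj1 t ih => simp [rename, ih h]
  | proj2 t ih => simp [rename, ih h]
  | lam t ih =>
    have h' : ∀ n, liftRen f n = liftRen g n := by
      intro n; cases n <;> simp [liftRen, h]
    simp [rename, ih h']
  | app t u iht ihu => simp [rename, iht h, ihu h]
  | inl t ih => simp [rename, ih h]
  | inr t ih => simp [rename, ih h]
  | raise t ih => simp [rename, ih h]
  | case s bl br ihs ihl ihr =>
    have h' : ∀ n, liftRen f n = liftRen g n := by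
      intro n; cases n <;> simp [liftRen, h]
    simp [rename, ihs h, ihl h', ihr h']

theorem rename_rename (f g : Nat → Nat) :
    ∀ t : Tm C, rename f (rename g t) = rename (f ∘ g) t := by
  intro t
  induction t generalizing f g with
  | cst c => rfl
  | var n => rfl
  | star => rfl
  | pair t u iht ihu => simp [rename, iht, ihu]
  | proj1 t ih => simp [rename, ih]
  | proj2 t ih => simp [rename, ih]
  | lam t ih =>
    simp only [rename, ih]
    exact congrArg _ (rename_ext (fun n => by cases n <;> rfl) t)
  | app t u iht ihu => simp [rename, iht, ihu]
  | inl t ih => simp [rename, ih]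
  | inr t ih => simp [rename, ih]
  | raise t ih => simp [rename, ih]
  | case s bl br ihs ihl ihr =>
    simp only [rename, ihs, ihl, ihr]
    rw [rename_ext (f := liftRen f ∘ liftRen g) (g := liftRen (f ∘ g))
        (fun n => by cases n <;> rfl) bl,
      rename_ext (f := liftRen f ∘ liftRen g) (g := liftRen (f ∘ g))
        (fun n => by cases n <;> rfl) br]

theorem subst_ext {σ τ : Nat → Tm C} (h : ∀ n, σ n = τ n) :
    ∀ t : Tm C, subst σ t = subst τ t := by
  intro t
  induction t generalizing σ τ with
  | cst c => rfl
  | var n => simp [subst, h]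
  | star => rfl
  | pair t u iht ihu => simp [subst, iht h, ihu h]
  | proj1 t ih => simp [subst, ih h]
  | proj2 t ih => simp [subst, ih h]
  | lam t ih =>
    have h' : ∀ n, liftSub σ n = liftSub τ n := by
      intro n; cases n <;> simp [liftSub, h]
    simp [subst, ih h']
  | app t u iht ihu => simp [subst, iht h, ihu h]
  | inl t ih => simp [subst, ih h]
  | inr t ih => simp [subst, ih h]
  | raise t ih => simp [subst, ih h]
  | case s bl br ihs ihl ihr =>
    have h' : ∀ n, liftSub σ n = liftSub τ n := by
      intro n; cases n <;> simp [liftSub, h]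
    simp [subst, ihs h, ihl h', ihr h']

theorem rename_subst (f : Nat → Nat) (σ : Nat → Tm C) :
    ∀ t : Tm C, rename f (subst σ t) = subst (fun n => rename f (σ n)) t := by
  intro t
  induction t generalizing f σ with
  | cst c => rfl
  | var n => rfl
  | star => rfl
  | pair t u iht ihu => simp [subst, rename, iht, ihu]
  | proj1 t ih => simp [subst, rename, ih]
  | proj2 t ih => simp [subst, rename, ih]
  | lam t ih =>
    simp only [subst, rename, ih]
    refine congrArg _ (subst_ext (fun n => ?_) t)
    cases n with
    | zero => rfl
    | succ m =>
      simp only [liftSub, rename_rename]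
      exact rename_ext (fun k => rfl) (σ m)
  | app t u iht ihu => simp [subst, rename, iht, ihu]
  | inl t ih => simp [subst, rename, ih]
  | inr t ih => simp [subst, rename, ih]
  | raise t ih => simp [subst, rename, ih]
  | case s bl br ihs ihl ihr =>
    simp only [subst, rename, ihs, ihl, ihr]
    have key : ∀ n, rename (liftRen f) (liftSub σ n) =
        liftSub (fun n => rename f (σ n)) n := by
      intro n; cases n with
      | zero => rfl
      | succ m =>
        simp only [liftSub, rename_rename]
        exact rename_ext (fun k => rfl) (σ m)
    rw [subst_ext key bl, subst_ext key br]

theorem subst_rename (σ : Nat → Tm C) (f : Nat → Nat) :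
    ∀ t : Tm C, subst σ (rename f t) = subst (fun n => σ (f n)) t := by
  intro t
  induction t generalizing f σ with
  | cst c => rfl
  | var n => rfl
  | star => rfl
  | pair t u iht ihu => simp [subst, rename, iht, ihu]
  | proj1 t ih => simp [subst, rename, ih]
  | proj2 t ih => simp [subst, rename, ih]
  | lam t ih =>
    simp only [rename, subst, ih]
    refine congrArg _ (subst_ext (fun n => ?_) t)
    cases n <;> rfl
  | app t u iht ihu => simp [subst, rename, iht, ihu]
  | inl t ih => simp [subst, rename, ih]
  | inr t ih => simp [subst, rename, ih]
  | raise t ih => simp [subst, rename, ih]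
  | case s bl br ihs ihl ihr =>
    simp only [rename, subst, ihs, ihl, ihr]
    have key : ∀ n, liftSub σ (liftRen f n) = liftSub (fun n => σ (f n)) n := by
      intro n; cases n <;> rfl
    rw [subst_ext key bl, subst_ext key br]

theorem rename_sub0 (f : Nat → Nat) (u t : Tm C) :
    rename f (subst (sub0 u) t) = subst (sub0 (rename f u)) (rename (liftRen f) t) := by
  rw [rename_subst, subst_rename]
  refine subst_ext (fun n => ?_) t
  cases n <;> rfl

/-- Action of a renaming on eliminations. -/
def renElim (f : Nat → Nat) : Elim C → Elim C
  | .eapp u => .eapp (rename f u)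
  | .eproj1 => .eproj1
  | .eproj2 => .eproj2
  | .ecase bl br => .ecase (rename (liftRen f) bl) (rename (liftRen f) br)

theorem rename_plug (f : Nat → Nat) (e : Elim C) (t : Tm C) :
    rename f (plug e t) = plug (renElim f e) (rename f t) := by
  cases e <;> rfl

theorem renElim_weaken (f : Nat → Nat) (e : Elim C) :
    renElim (liftRen f) (weakenElim e) = weakenElim (renElim f e) := by
  cases e with
  | eapp u =>
    simp only [renElim, weakenElim, rename_rename]
    exact congrArg _ (rename_ext (fun n => rfl) u)
  | eproj1 => rfl
  | eproj2 => rfl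
  | ecase bl br =>
    simp only [renElim, weakenElim, rename_rename]
    rw [rename_ext (f := liftRen (liftRen f) ∘ liftRen Nat.succ)
        (g := liftRen Nat.succ ∘ liftRen f) (fun n => by cases n <;> rfl) bl,
      rename_ext (f := liftRen (liftRen f) ∘ liftRen Nat.succ)
        (g := liftRen Nat.succ ∘ liftRen f) (fun n => by cases n <;> rfl) br]

theorem BetaBase.ren {t u : Tm C} (f : Nat → Nat) (h : BetaBase t u) :
    BetaBase (rename f t) (rename f u) := by
  cases h with
  | proj1 t u => exact .proj1 _ _
  | proj2 t u => exact .proj2 _ _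
  | app t u =>
    rw [show rename f (subst (sub0 u) t) =
      subst (sub0 (rename f u)) (rename (liftRen f) t) from rename_sub0 f u t]
    exact .app _ _
  | case_inl a bl br =>
    rw [show rename f (subst (sub0 a) bl) =
      subst (sub0 (rename f a)) (rename (liftRen f) bl) from rename_sub0 f a bl]
    exact .case_inl _ _ _
  | case_inr b bl br =>
    rw [show rename f (subst (sub0 b) br) =
      subst (sub0 (rename f b)) (rename (liftRen f) br) from rename_sub0 f b br]
    exact .case_inr _ _ _

theorem CCBase.ren {t u : Tm C} (f : Nat → Nat) (h : CCBase t u) :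
    CCBase (rename f t) (rename f u) := by
  cases h with
  | raise e t =>
    rw [show rename f (plug e (.raise t)) =
        plug (renElim f e) (.raise (rename f t)) from rename_plug f e _]
    exact .raise _ _
  | case e s bl br =>
    rw [rename_plug]
    show CCBase _ (rename f (.case s (plug (weakenElim e) bl) (plug (weakenElim e) br)))
    have : rename f (.case s (plug (weakenElim e) bl) (plug (weakenElim e) br)) =
        .case (rename f s) (plug (weakenElim (renElim f e)) (rename (liftRen f) bl))
          (plug (weakenElim (renElim f e)) (rename (liftRen f) br)) := by
      simp only [rename, rename_plug, renElim_weaken]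
    rw [this]
    exact .case _ _ _ _

theorem Cong.ren {R : Tm C → Tm C → Prop}
    (hR : ∀ (f : Nat → Nat) {t u : Tm C}, R t u → R (rename f t) (rename f u))
    {t u : Tm C} (f : Nat → Nat) (h : Cong R t u) :
    Cong R (rename f t) (rename f u) := by
  induction h generalizing f with
  | base hb => exact .base (hR f hb)
  | pairL _ ih => exact .pairL (ih f)
  | pairR _ ih => exact .pairR (ih f)
  | proj1 _ ih => exact .proj1 (ih f)
  | proj2 _ ih => exact .proj2 (ih f)
  | lam _ ih => exact .lam (ih (liftRen f))
  | appL _ ih => exact .appL (ih f)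
  | appR _ ih => exact .appR (ih f)
  | inl _ ih => exact .inl (ih f)
  | inr _ ih => exact .inr (ih f)
  | raise _ ih => exact .raise (ih f)
  | caseS _ ih => exact .caseS (ih f)
  | caseL _ ih => exact .caseL (ih (liftRen f))
  | caseR _ ih => exact .caseR (ih (liftRen f))

theorem Step.ren {t u : Tm C} (f : Nat → Nat) (h : Step t u) :
    Step (rename f t) (rename f u) :=
  Cong.ren (fun f {t u} h => Or.elim h (fun h => Or.inl (h.ren f)) (fun h => Or.inr (h.ren f))) f h

theorem Reds.map {g : Tm C → Tm C}
    (hg : ∀ {a b : Tm C}, Step a b → Step (g a) (g b))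
    {t u : Tm C} (h : Reds t u) : Reds (g t) (g u) := by
  induction h with
  | refl => exact .refl
  | tail _ hstep ih => exact ih.tail (hg hstep)

theorem Reds.ren {t u : Tm C} (f : Nat → Nat) (h : Reds t u) :
    Reds (rename f t) (rename f u) :=
  Reds.map (fun hs => hs.ren f) h

theorem IsRen.lift {ρ : Nat → Nat} {Δ Γ : List (Ty B)} {A : Ty B}
    (h : IsRen ρ Δ Γ) : IsRen (liftRen ρ) (A :: Δ) (A :: Γ) := by
  intro n T hn
  cases n with
  | zero =>
    have hA : A = T := by simpa using hn
    subst hA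
    simp [liftRen]
  | succ m =>
    simp only [List.getElem?_cons_succ] at hn
    simpa [liftRen] using h m T hn

theorem IsRen.succ {Δ : List (Ty B)} {A : Ty B} : IsRen Nat.succ (A :: Δ) Δ := by
  intro n T hn
  simpa using hn

theorem IsRen.comp {f g : Nat → Nat} {Γ Δ E : List (Ty B)}
    (hf : IsRen f Δ Γ) (hg : IsRen g E Δ) : IsRen (fun n => g (f n)) E Γ :=
  fun n A h => hg _ _ (hf n A h)

mutual
theorem Check.ren {Γ Δ : List (Ty B)} {ρ : Nat → Nat} {t : Tm C} {A : Ty B}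
    (h : Check tyof Γ t A) (hρ : IsRen ρ Δ Γ) : Check tyof Δ (rename ρ t) A :=
  match h with
  | .star => .star
  | .pair h1 h2 => .pair (h1.ren hρ) (h2.ren hρ)
  | .lam h => .lam (h.ren hρ.lift)
  | .inl h => .inl (h.ren hρ)
  | .inr h => .inr (h.ren hρ)
  | .demote h e => .demote (h.ren hρ) e
  | .raise h => .raise (h.ren hρ)
  | .case hs hl hr => .case (hs.ren hρ) (hl.ren hρ.lift) (hr.ren hρ.lift)

theorem Infer.ren {Γ Δ : List (Ty B)} {ρ : Nat → Nat} {t : Tm C} {A : Ty B}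
    (h : Infer tyof Γ t A) (hρ : IsRen ρ Δ Γ) : Infer tyof Δ (rename ρ t) A :=
  match h with
  | .cst _ c => .cst Δ c
  | .var hn => .var (hρ _ _ hn)
  | .proj1 h => .proj1 (h.ren hρ)
  | .proj2 h => .proj2 (h.ren hρ)
  | .app h1 h2 => .app (h1.ren hρ) (h2.ren hρ)
end

theorem Covered.ren {F : List (Ty B) → Tm C → Prop}
    (hF : ∀ {Γ Δ : List (Ty B)} {ρ : Nat → Nat} {t : Tm C},
      F Γ t → IsRen ρ Δ Γ → F Δ (rename ρ t))
    {Γ Δ : List (Ty B)} {ρ : Nat → Nat} {t : Tm C}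
    (h : Covered tyof F Γ t) (hρ : IsRen ρ Δ Γ) :
    Covered tyof F Δ (rename ρ t) := by
  induction h generalizing Δ ρ with
  | leaf hf => exact .leaf (hF hf hρ)
  | raise hn => exact .raise (hn.ren hρ)
  | case hn _ _ ihl ihr => exact .case (hn.ren hρ) (ihl hρ.lift) (ihr hρ.lift)

theorem Value.ren : ∀ (T : Ty B) {Γ Δ : List (Ty B)} {ρ : Nat → Nat} {t : Tm C},
    Value tyof T Γ t → IsRen ρ Δ Γ → Value tyof T Δ (rename ρ t) := by
  intro T
  induction T with
  | base b =>
    intro Γ Δ ρ t hv hρ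
    exact Covered.ren (fun hf hρ => hf.ren hρ) hv hρ
  | unit =>
    intro Γ Δ ρ t hv hρ
    exact Check.ren hv hρ
  | empty =>
    intro Γ Δ ρ t hv hρ
    exact Covered.ren (fun hf hρ => hf.ren hρ) hv hρ
  | prod A A' ihA ihA' =>
    intro Γ Δ ρ t hv hρ
    obtain ⟨hc, ⟨v1, hr1, hv1⟩, ⟨v2, hr2, hv2⟩⟩ := hv
    refine ⟨hc.ren hρ, ⟨rename ρ v1, ?_, ihA hv1 hρ⟩, ⟨rename ρ v2, ?_, ihA' hv2 hρ⟩⟩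
    · exact hr1.ren ρ
    · exact hr2.ren ρ
  | sum A A' ihA ihA' =>
    intro Γ Δ ρ t hv hρ
    refine Covered.ren (fun {Γ Δ ρ t} hf hρ => ?_) hv hρ
    rcases hf with hn | ⟨a, rfl, ha⟩ | ⟨b, rfl, hb⟩
    · exact Or.inl (hn.ren hρ)
    · exact Or.inr (Or.inl ⟨rename ρ a, rfl, ihA ha hρ⟩)
    · exact Or.inr (Or.inr ⟨rename ρ b, rfl, ihA' hb hρ⟩)
  | arr A A' ihA ihA' =>
    intro Γ Δ ρ t hv hρ
    obtain ⟨hc, hfun⟩ := hv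
    refine ⟨hc.ren hρ, fun Δ' ρ' hρ' u hu => ?_⟩
    rw [rename_rename]
    exact hfun Δ' (ρ' ∘ ρ) (hρ.comp hρ') u hu

theorem value_raise (T : Ty B) {Γ : List (Ty B)} {n : Tm C}
    (h : Infer tyof Γ n .empty) : Value tyof T Γ (.raise n) := by
  induction T generalizing Γ n with
  | base b => exact .raise h
  | unit => exact .raise h
  | empty => exact .raise h
  | prod A A' ihA ihA' =>
    refine ⟨.raise h, ⟨.raise n, ?_, ihA h⟩, ⟨.raise n, ?_, ihA' h⟩⟩
    · exact Relation.ReflTransGen.single (.base (Or.inr (CCBase.raise .eproj1 n)))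
    · exact Relation.ReflTransGen.single (.base (Or.inr (CCBase.raise .eproj2 n)))
  | sum A A' ihA ihA' => exact .raise h
  | arr A A' ihA ihA' =>
    refine ⟨.raise h, fun Δ ρ hρ u hu => ?_⟩
    exact ⟨.raise (rename ρ n),
      Relation.ReflTransGen.single (.base (Or.inr (CCBase.raise (.eapp u) (rename ρ n)))),
      ihA' (h.ren hρ)⟩

theorem value_case (T : Ty B) {Γ : List (Ty B)} {A A' : Ty B} {n vl vr : Tm C}
    (hn : Infer tyof Γ n (.sum A A'))
    (hl : Value tyof T (A :: Γ) vl) (hr : Value tyof T (A' :: Γ) vr) :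
    Value tyof T Γ (.case n vl vr) := by
  induction T generalizing Γ A A' n vl vr with
  | base b => exact .case hn hl hr
  | unit => exact .case hn hl hr
  | empty => exact .case hn hl hr
  | sum T T' ihT ihT' => exact .case hn hl hr
  | prod T T' ihT ihT' =>
    obtain ⟨hcl, ⟨wl1, hwl1, hvl1⟩, ⟨wl2, hwl2, hvl2⟩⟩ := hl
    obtain ⟨hcr, ⟨wr1, hwr1, hvr1⟩, ⟨wr2, hwr2, hvr2⟩⟩ := hr
    refine ⟨.case hn hcl hcr, ⟨.case n wl1 wr1, ?_, ihT hn hvl1 hvr1⟩,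
      ⟨.case n wl2 wr2, ?_, ihT' hn hvl2 hvr2⟩⟩
    · refine Relation.ReflTransGen.head (.base (Or.inr (CCBase.case .eproj1 n vl vr))) ?_
      exact (Reds.map (fun h => Cong.caseL h) hwl1).trans
        (Reds.map (fun h => Cong.caseR h) hwr1)
    · refine Relation.ReflTransGen.head (.base (Or.inr (CCBase.case .eproj2 n vl vr))) ?_
      exact (Reds.map (fun h => Cong.caseL h) hwl2).trans
        (Reds.map (fun h => Cong.caseR h) hwr2)
  | arr T T' ihT ihT' =>
    obtain ⟨hcl, hfl⟩ := hl
    obtain ⟨hcr, hfr⟩ := hr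
    refine ⟨.case hn hcl hcr, fun Δ ρ hρ u hu => ?_⟩
    obtain ⟨wl, hwl, hvwl⟩ := hfl (A :: Δ) (liftRen ρ) hρ.lift
      (rename Nat.succ u) (Value.ren T hu IsRen.succ)
    obtain ⟨wr, hwr, hvwr⟩ := hfr (A' :: Δ) (liftRen ρ) hρ.lift
      (rename Nat.succ u) (Value.ren T hu IsRen.succ)
    refine ⟨.case (rename ρ n) wl wr, ?_, ihT' (hn.ren hρ) hvwl hvwr⟩
    have h1 : Step (.app (rename ρ (.case n vl vr)) u)
        (.case (rename ρ n) (.app (rename (liftRen ρ) vl) (rename Nat.succ u))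
          (.app (rename (liftRen ρ) vr) (rename Nat.succ u))) :=
      .base (Or.inr (CCBase.case (.eapp u) (rename ρ n)
        (rename (liftRen ρ) vl) (rename (liftRen ρ) vr)))
    refine Relation.ReflTransGen.head h1 ?_
    exact (Reds.map (g := fun x => Tm.case (rename ρ n) x
        (.app (rename (liftRen ρ) vr) (rename Nat.succ u)))
        (fun h => Cong.caseL h) hwl).trans
      (Reds.map (g := fun x => Tm.case (rename ρ n) wl x)
        (fun h => Cong.caseR h) hwr)

end Aux

/-- **Reducible cover.** A term covered by reducible terms is reducible. -/
theorem covered_reducible {B C : Type} (tyof : C → Ty B)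
    (T : Ty B) (Γ : List (Ty B)) (t : Tm C)
    (ht : HasType tyof Γ t T)
    (h : Covered tyof (fun Δ u => Reducible tyof T Δ u) Γ t) :
    Reducible tyof T Γ t := by
  clear ht
  induction h with
  | leaf hf => exact hf
  | raise hn => exact ⟨_, .refl, value_raise _ hn⟩
  | @case Γ' n A A' bl br hn _ _ ihl ihr =>
    obtain ⟨vl, hvl, hwl⟩ := ihl
    obtain ⟨vr, hvr, hwr⟩ := ihr
    exact ⟨.case n vl vr,
      (Reds.map (g := fun x => Tm.case n x br) (fun h => Cong.caseL h) hvl).trans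
        (Reds.map (g := fun x => Tm.case n vl x) (fun h => Cong.caseR h) hvr),
      value_case _ hn hwl hwr⟩

end STLCp
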